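/- arXiv:0907.2470 — 3 statements merged into one kernel-verified Lean document; each statement's English description precedes it below -/
import Mathlib

section
/- For all α, β ∈ X and all n ≥ 0, L_n(α # β) = L_n(α) · L_n(β) in Γ_Q. -/
open scoped BigOperators

noncomputable section

attribute [local instance] Classical.propDecidable

/-- `I`: the set of dyadic rationals in `[0,1]`. -/
def dyadicI : Set ℚ := {t | 0 ≤ t ∧ t ≤ 1 ∧ ∃ i n : ℕ, t = (i : ℚ) / 2 ^ n}

/-- `X` is the ℚ-vector space of functions `I → ℚ`. -/
abbrev X : Type := dyadicI → ℚ

lemma dyadicI_mem {i n : ℕ} (h : i ≤ 2 ^ n) : (i : ℚ) / 2 ^ n ∈ dyadicI := by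
  refine ⟨by positivity, ?_, i, n, rfl⟩
  rw [div_le_one (by positivity)]
  exact_mod_cast h

lemma zero_mem_dyadicI : (0 : ℚ) ∈ dyadicI := by
  simpa using dyadicI_mem (i := 0) (n := 0) (by norm_num)

lemma one_mem_dyadicI : (1 : ℚ) ∈ dyadicI := by
  simpa using dyadicI_mem (i := 1) (n := 0) (by norm_num)

lemma half_mem_dyadicI : (1 / 2 : ℚ) ∈ dyadicI := by
  have := dyadicI_mem (i := 1) (n := 1) (by norm_num)
  norm_num at this ⊢
  exact this

/-- Evaluation of `α : X` at a rational, extended by `0` off `I`. -/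
def evI (α : X) (t : ℚ) : ℚ := if h : t ∈ dyadicI then α ⟨t, h⟩ else 0

/-- The map `T₀ : X → X`, `(T₀ α)(t) = α (t/2)`. -/
def T0 (α : X) : X := fun t => evI α (t.1 / 2)

/-- The map `T₁ : X → X`, `(T₁ α)(t) = α ((1+t)/2)`. -/
def T1 (α : X) : X := fun t => evI α ((1 + t.1) / 2)

/-- Auxiliary recursion (on the exponent of the denominator) defining `α # β`. -/
def hashAux : ℕ → X → X → ℚ → ℚ
  | 0, α, β, t =>
      if t = 0 then 0 else (evI α 1 - evI α 0) * (evI β 1 - evI β 0)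
  | n + 1, α, β, t =>
      if t ≤ 1 / 2 then
        hashAux n (T0 α) (T0 β) (2 * t) + hashAux n (T1 α) (T1 β) (2 * t)
      else
        hashAux n (T0 α) (T0 β) 1 + hashAux n (T1 α) (T1 β) 1 +
          hashAux n (T0 α) (T1 β) (2 * t - 1) + hashAux n (T1 α) (T0 β) (2 * t - 1)

/-- The product `α # β` on `X`. -/
def hash (α β : X) : X := fun t => hashAux (padicValNat 2 t.1.den) α β t.1

/-- The element `t ↦ t` of `X`. -/
def tId : X := fun t => t.1

/-- The element `ε : t ↦ t − t²` of `X`. -/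
def epsX : X := fun t => t.1 - t.1 ^ 2

/-- The constant function `1` in `X`. -/
def oneX : X := fun _ => (1 : ℚ)

/-- Convexity: `2α(i/q) ≥ α((i−1)/q) + α((i+1)/q)` for all powers of two `q = 2^n`, `0 < i < q`. -/
def ConvexX (α : X) : Prop :=
  ∀ n i : ℕ, 0 < i → i < 2 ^ n →
    evI α (((i : ℚ) - 1) / 2 ^ n) + evI α (((i : ℚ) + 1) / 2 ^ n)
      ≤ 2 * evI α ((i : ℚ) / 2 ^ n)

/-- `α` is Lipschitz with constant `m`. -/
def LipschitzQ (m : ℚ) (α : X) : Prop :=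
  ∀ s t : dyadicI, |α s - α t| ≤ m * |s.1 - t.1|

/-- The point `2^{-n}` of `I`. -/
def invPow (n : ℕ) : dyadicI :=
  ⟨1 / 2 ^ n, by simpa using dyadicI_mem (i := 1) (n := n) Nat.one_le_two_pow⟩

/-- `μ` is the Hilbert–Kunz multiplicity of `α`, i.e. `μ = lim 2^n α(2^{-n})`. -/
def IsHKmu (α : X) (μ : ℝ) : Prop :=
  Filter.Tendsto (fun n : ℕ => ((2 ^ n * α (invPow n) : ℚ) : ℝ)) Filter.atTop (nhds μ)

/-- The series `S_α = Σ α(2^{-n}) (2w)^n = Σ (2^n α(2^{-n})) w^n`. -/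
def hkSeries (α : X) : PowerSeries ℚ := PowerSeries.mk fun n => 2 ^ n * α (invPow n)

/-- Auxiliary recursion defining the functions `φ_m`. -/
def phiAux : ℕ → ℕ → ℚ → ℚ
  | 0, _, _ => 0
  | n + 1, m, t =>
      if t ≤ 1 / 2 then
        if m % 2 = 0 then (phiAux n (m + 1) (2 * t) + (8 * (m : ℚ) + 6) * t) / 8
        else (phiAux n (m - 1) (2 * t) + ((2 * t) - (2 * t) ^ 2) + (8 * (m : ℚ) + 6) * t) / 8
      else
        if m = 0 then (phiAux n 0 (2 * t - 1) + 6 * (1 - t)) / 8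
        else if m % 2 = 0 then
          (phiAux n (m - 1) (2 * t - 1) + ((2 * t - 1) - (2 * t - 1) ^ 2)
            + (8 * (m : ℚ) + 6) * (1 - t)) / 8
        else (phiAux n (m + 1) (2 * t - 1) + (8 * (m : ℚ) + 6) * (1 - t)) / 8

/-- The functions `φ_m ∈ X` of Definition 2.2. -/
def phiM (m : ℕ) : X := fun t => phiAux (padicValNat 2 t.1.den) m t.1

/-- `ℕ` with the Nim-sum (bitwise XOR) as its (commutative) monoid operation. -/
def NimNat : Type := ℕ

instance : CommMonoid NimNat where
  mul a b := Nat.xor a b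
  one := (0 : ℕ)
  mul_assoc := Nat.xor_assoc
  mul_comm := Nat.xor_comm
  one_mul := Nat.zero_xor
  mul_one := Nat.xor_zero

/-- The ring `Γ`: free `ℤ`-module on `λ₀, λ₁, …` with `λᵢλⱼ = λ_{i XOR j}`. -/
abbrev GammaZ : Type := MonoidAlgebra ℤ NimNat

/-- The ring `Γ_Q = Γ ⊗ ℚ`. -/
abbrev GammaQ : Type := MonoidAlgebra ℚ NimNat

/-- The basis element `λᵢ` of `Γ`. -/
def lamZ (i : ℕ) : GammaZ := MonoidAlgebra.single (show NimNat from i) 1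

/-- The basis element `λᵢ` of `Γ_Q`. -/
def lamQ (i : ℕ) : GammaQ := MonoidAlgebra.single (show NimNat from i) 1

/-- `δ_r = λ₀ − λ₁ + ⋯ + (−1)^{r−1} λ_{r−1}` in `Γ`. -/
def deltaZ (r : ℕ) : GammaZ := ∑ i ∈ Finset.range r, ((-1 : ℤ) ^ i) • lamZ i

/-- `δ_r` in `Γ_Q`. -/
def deltaQ (r : ℕ) : GammaQ := ∑ i ∈ Finset.range r, ((-1 : ℚ) ^ i) • lamQ i

/-- `L_n(α) = Σ_{i=0}^{2^n−1} (α((i+1)/2^n) − α(i/2^n)) (−1)^i λᵢ ∈ Γ_Q`. -/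
def Ln (n : ℕ) (α : X) : GammaQ :=
  ∑ i ∈ Finset.range (2 ^ n),
    ((-1 : ℚ) ^ i * (evI α (((i : ℚ) + 1) / 2 ^ n) - evI α ((i : ℚ) / 2 ^ n))) • lamQ i

/-- The Hilbert–Kunz function `φ_f ∈ X` of a power series `f`:
`φ_f(i/q) = q^{-r} · dim_F F[[u₁,…,u_r]]/(u₁^q,…,u_r^q,f^i)`. -/
def phiF {F : Type} [Field F] {σ : Type} (f : MvPowerSeries σ F) : X := fun t =>
  ((Module.finrank F
      (MvPowerSeries σ F ⧸ Ideal.span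
        (Set.range (fun j : σ => (MvPowerSeries.X j : MvPowerSeries σ F) ^ t.1.den)
          ∪ {f ^ t.1.num.toNat}))) : ℚ)
    / (t.1.den : ℚ) ^ (Nat.card σ)

/-- The natural inclusion `F[[u_j : j ∈ σ]] → F[[u_j : j ∈ τ]]` along an injection `e : σ → τ`. -/
def embPS {F : Type} [Field F] {σ τ : Type} (e : σ → τ) (f : MvPowerSeries σ F) :
    MvPowerSeries τ F := fun d =>
  if h : ∃ d' : σ →₀ ℕ, Finsupp.mapDomain e d' = d then
    MvPowerSeries.coeff h.choose f
  else 0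

/-! Write `Dₙγ(i) = γ((i+1)/2ⁿ) − γ(i/2ⁿ)`, so that `Lₙγ = ∑ᵢ (−1)ⁱ Dₙγ(i) λᵢ`. Since
`λᵢλⱼ = λ_{i⊕j}` and `(−1)^{i⊕j} = (−1)ⁱ(−1)ʲ`, the `k`-th coefficient of `Lₙα · Lₙβ` is
`(−1)ᵏ ∑ᵢ Dₙα(i) Dₙβ(i⊕k)`, so it suffices that the increments of `α # β` are the Nim-convolution
of those of `α` and `β`. This goes by induction on `n`: the level-`(n+1)` increments of `γ` on the
two halves of `I` are the level-`n` increments of `T₀γ` and `T₁γ`, and the four terms of the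
recursion for `#` on `[1/2, 1]` match the four ways of distributing the top bit `2ⁿ` between `i`
and `i ⊕ k`. The only other ingredient is that the recursion is stable under refining the level,
so `(α # β)(k/2ⁿ)` may be computed at level `n` rather than at that of the reduced denominator. -/

namespace Nat

lemma two_pow_xor_of_lt {n a : ℕ} (h : a < 2 ^ n) : 2 ^ n ^^^ a = 2 ^ n + a := by
  rw [add_comm, ← Nat.or_two_pow_eq_add_of_lt h]
  refine Nat.eq_of_testBit_eq fun i => ?_
  simp only [Nat.testBit_xor, Nat.testBit_or, Nat.testBit_two_pow]
  rcases eq_or_ne n i with rfl | hi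
  · simp [Nat.testBit_lt_two_pow h]
  · simp [hi]

lemma xor_two_pow_add {n i k : ℕ} (hi : i < 2 ^ n) (hk : k < 2 ^ n) :
    i ^^^ (2 ^ n + k) = 2 ^ n + (i ^^^ k) := by
  rw [← two_pow_xor_of_lt hk, ← two_pow_xor_of_lt (xor_lt_two_pow hi hk), Nat.xor_left_comm]

lemma two_pow_add_xor {n i k : ℕ} (hi : i < 2 ^ n) (hk : k < 2 ^ n) :
    (2 ^ n + i) ^^^ k = 2 ^ n + (i ^^^ k) := by
  rw [Nat.xor_comm, xor_two_pow_add hk hi, Nat.xor_comm]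

lemma two_pow_add_xor_two_pow_add {n i k : ℕ} (hi : i < 2 ^ n) (hk : k < 2 ^ n) :
    (2 ^ n + i) ^^^ (2 ^ n + k) = i ^^^ k := by
  rw [← two_pow_xor_of_lt hi, ← two_pow_xor_of_lt hk, Nat.xor_comm (2 ^ n) i, Nat.xor_assoc,
    Nat.xor_xor_cancel_left]

end Nat

lemma neg_one_pow_xor {R : Type*} [Ring R] (i k : ℕ) :
    (-1 : R) ^ (i ^^^ k) = (-1) ^ i * (-1) ^ k := by
  rw [← pow_add, neg_one_pow_eq_pow_mod_two, Nat.xor_mod_two_eq, ← neg_one_pow_eq_pow_mod_two]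

lemma sum_range_two_pow_xor {M : Type*} [AddCommMonoid M] {n i : ℕ} (hi : i < 2 ^ n)
    (f : ℕ → M) :
    ∑ k ∈ Finset.range (2 ^ n), f (i ^^^ k) = ∑ j ∈ Finset.range (2 ^ n), f j := by
  refine Finset.sum_nbij' (i ^^^ ·) (i ^^^ ·) ?_ ?_ ?_ ?_ ?_ <;>
    simp +contextual [Nat.xor_lt_two_pow hi]

lemma sum_range_two_pow_succ {M : Type*} [AddCommMonoid M] (n : ℕ) (f : ℕ → M) :
    ∑ i ∈ Finset.range (2 ^ (n + 1)), f i =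
      ∑ i ∈ Finset.range (2 ^ n), f i + ∑ i ∈ Finset.range (2 ^ n), f (2 ^ n + i) := by
  rw [pow_succ, mul_two, Finset.sum_range_add]

lemma lamQ_mul_lamQ (i j : ℕ) : lamQ i * lamQ j = lamQ (i ^^^ j) := by
  rw [lamQ, lamQ, lamQ, MonoidAlgebra.single_mul_single, one_mul]
  rfl

def lamSum (n : ℕ) (f : ℕ → ℚ) : GammaQ := ∑ i ∈ Finset.range (2 ^ n), f i • lamQ i

lemma lamSum_mul_lamSum (n : ℕ) (f g : ℕ → ℚ) :
    lamSum n f * lamSum n g =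
      lamSum n fun k => ∑ i ∈ Finset.range (2 ^ n), f i * g (i ^^^ k) := by
  have row : ∀ i ∈ Finset.range (2 ^ n),
      ∑ j ∈ Finset.range (2 ^ n), (f i • lamQ i) * (g j • lamQ j) =
        ∑ k ∈ Finset.range (2 ^ n), (f i * g (i ^^^ k)) • lamQ k := by
    intro i hi
    rw [← sum_range_two_pow_xor (Finset.mem_range.mp hi)]
    refine Finset.sum_congr rfl fun k _ => ?_
    rw [smul_mul_smul_comm, lamQ_mul_lamQ, Nat.xor_xor_cancel_left]
  simp only [lamSum, Finset.sum_mul_sum, Finset.sum_congr rfl row, Finset.sum_smul]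
  exact Finset.sum_comm

lemma two_mul_div_two_pow_succ (x : ℚ) (n : ℕ) : 2 * (x / 2 ^ (n + 1)) = x / 2 ^ n := by
  rw [pow_succ]; field_simp

lemma div_two_pow_succ_le_half {x : ℚ} {n : ℕ} (hx : x ≤ 2 ^ n) : x / 2 ^ (n + 1) ≤ 1 / 2 := by
  rw [div_le_div_iff₀ (by positivity) two_pos, pow_succ]
  linarith

lemma half_le_two_pow_add_div {x : ℚ} {n : ℕ} (hx : 0 ≤ x) : 1 / 2 ≤ (2 ^ n + x) / 2 ^ (n + 1) := by
  rw [div_le_div_iff₀ two_pos (by positivity), pow_succ]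
  linarith

lemma two_mul_two_pow_add_div_sub_one (x : ℚ) (n : ℕ) :
    2 * ((2 ^ n + x) / 2 ^ (n + 1)) - 1 = x / 2 ^ n := by
  rw [pow_succ]; field_simp; ring

lemma succ_div_two_pow_mem_dyadicI {k n : ℕ} (hk : k < 2 ^ n) :
    ((k : ℚ) + 1) / 2 ^ n ∈ dyadicI := by
  exact_mod_cast dyadicI_mem (i := k + 1) (n := n) hk

lemma exists_den_eq_two_pow_of_le {k n : ℕ} (hk : k ≤ 2 ^ n) :
    ∃ v j : ℕ, v ≤ n ∧ j ≤ 2 ^ v ∧ ((k : ℚ) / 2 ^ n).den = 2 ^ v ∧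
      (k : ℚ) / 2 ^ n = (j : ℚ) / 2 ^ v := by
  set t : ℚ := (k : ℚ) / 2 ^ n
  have hden : t.den ∣ 2 ^ n := by
    have : t = Rat.divInt k ((2 ^ n : ℕ) : ℤ) := by rw [Rat.divInt_eq_div]; push_cast; rfl
    exact_mod_cast this ▸ Rat.den_dvd _ _
  obtain ⟨v, hv, hv'⟩ := (Nat.dvd_prime_pow Nat.prime_two).mp hden
  have hnum : (t.num.toNat : ℚ) = t.num := by
    exact_mod_cast Int.toNat_of_nonneg (Rat.num_nonneg.mpr (by positivity))
  have ht : t = (t.num.toNat : ℚ) / 2 ^ v := by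
    rw [hnum, ← Nat.cast_ofNat, ← Nat.cast_pow, ← hv', Rat.num_div_den]
  refine ⟨v, t.num.toNat, hv, ?_, hv', ht⟩
  have : (t.num.toNat : ℚ) ≤ 2 ^ v := by
    rw [← div_le_one (by positivity), ← ht]
    exact (dyadicI_mem hk).2.1
  exact_mod_cast this

lemma evI_T0 (α : X) {t : ℚ} (h : t ∈ dyadicI) : evI (T0 α) t = evI α (t / 2) := by
  rw [evI, dif_pos h]; rfl

lemma evI_T1 (α : X) {t : ℚ} (h : t ∈ dyadicI) : evI (T1 α) t = evI α ((1 + t) / 2) := by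
  rw [evI, dif_pos h]; rfl

def dyadicDiff (n : ℕ) (α : X) (i : ℕ) : ℚ :=
  evI α (((i : ℚ) + 1) / 2 ^ n) - evI α ((i : ℚ) / 2 ^ n)

lemma Ln_eq_lamSum (n : ℕ) (α : X) : Ln n α = lamSum n fun i => (-1) ^ i * dyadicDiff n α i :=
  rfl

lemma dyadicDiff_T0 (α : X) {n i : ℕ} (h : i < 2 ^ n) :
    dyadicDiff n (T0 α) i = dyadicDiff (n + 1) α i := by
  rw [dyadicDiff, dyadicDiff, evI_T0 α (succ_div_two_pow_mem_dyadicI h),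
    evI_T0 α (dyadicI_mem h.le), div_div, div_div, ← pow_succ]

lemma dyadicDiff_T1 (α : X) {n i : ℕ} (h : i < 2 ^ n) :
    dyadicDiff n (T1 α) i = dyadicDiff (n + 1) α (2 ^ n + i) := by
  have hpt : ∀ x : ℚ, (1 + x / 2 ^ n) / 2 = (2 ^ n + x) / 2 ^ (n + 1) := fun x => by
    rw [pow_succ]; field_simp
  rw [dyadicDiff, dyadicDiff, evI_T1 α (succ_div_two_pow_mem_dyadicI h),
    evI_T1 α (dyadicI_mem h.le), hpt, hpt]
  push_cast
  ring_nf

def xorConv (n : ℕ) (α β : X) (k : ℕ) : ℚ :=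
  ∑ i ∈ Finset.range (2 ^ n), dyadicDiff n α i * dyadicDiff n β (i ^^^ k)

section

variable (α β : X)

lemma hashAux_at_zero (n : ℕ) : hashAux n α β 0 = 0 := by
  induction n generalizing α β with
  | zero => simp [hashAux]
  | succ n ih => simp [hashAux, ih]

lemma hashAux_succ_of_le_half (n : ℕ) {t : ℚ} (h : t ≤ 1 / 2) :
    hashAux (n + 1) α β t =
      hashAux n (T0 α) (T0 β) (2 * t) + hashAux n (T1 α) (T1 β) (2 * t) := by
  rw [hashAux, if_pos h]

/-- At `t = 1/2` both branches of the recursion agree, since `hashAux` vanishes at `0`. -/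
lemma hashAux_succ_of_half_le (n : ℕ) {t : ℚ} (h : 1 / 2 ≤ t) :
    hashAux (n + 1) α β t =
      hashAux n (T0 α) (T0 β) 1 + hashAux n (T1 α) (T1 β) 1 +
        hashAux n (T0 α) (T1 β) (2 * t - 1) + hashAux n (T1 α) (T0 β) (2 * t - 1) := by
  rcases h.lt_or_eq with h | rfl
  · rw [hashAux, if_neg h.not_ge]
  · rw [hashAux_succ_of_le_half α β n le_rfl]
    norm_num [hashAux_at_zero]

lemma hashAux_one_at_one : hashAux 1 α β 1 = hashAux 0 α β 1 := by
  rw [hashAux_succ_of_half_le α β 0 (by norm_num)]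
  simp only [hashAux, one_ne_zero, if_false]
  rw [evI_T0 α one_mem_dyadicI, evI_T0 α zero_mem_dyadicI, evI_T0 β one_mem_dyadicI,
    evI_T0 β zero_mem_dyadicI, evI_T1 α one_mem_dyadicI, evI_T1 α zero_mem_dyadicI,
    evI_T1 β one_mem_dyadicI, evI_T1 β zero_mem_dyadicI]
  norm_num
  ring

lemma hashAux_succ_div_two_pow {n k : ℕ} (hk : k ≤ 2 ^ n) :
    hashAux (n + 1) α β ((k : ℚ) / 2 ^ n) = hashAux n α β ((k : ℚ) / 2 ^ n) := by
  induction n generalizing α β k with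
  | zero =>
    interval_cases k
    · simp [hashAux_at_zero]
    · simpa using hashAux_one_at_one α β
  | succ n ih =>
    have ih_one : ∀ α β : X, hashAux (n + 1) α β 1 = hashAux n α β 1 := fun α β => by
      simpa using ih α β le_rfl
    rcases le_or_gt k (2 ^ n) with hkn | hkn
    · have h := div_two_pow_succ_le_half (x := k) (by exact_mod_cast hkn)
      rw [hashAux_succ_of_le_half _ _ _ h, hashAux_succ_of_le_half _ _ _ h,
        two_mul_div_two_pow_succ, ih _ _ hkn, ih _ _ hkn]
    · obtain ⟨k, rfl⟩ := Nat.exists_eq_add_of_le hkn.le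
      have hk' : k ≤ 2 ^ n := by rw [pow_succ] at hk; omega
      have h := half_le_two_pow_add_div (n := n) (Nat.cast_nonneg' k)
      push_cast
      rw [hashAux_succ_of_half_le _ _ _ h, hashAux_succ_of_half_le _ _ _ h,
        two_mul_two_pow_add_div_sub_one, ih_one, ih_one, ih _ _ hk', ih _ _ hk']

lemma hashAux_div_two_pow_of_le {n m k : ℕ} (hnm : n ≤ m) (hk : k ≤ 2 ^ n) :
    hashAux m α β ((k : ℚ) / 2 ^ n) = hashAux n α β ((k : ℚ) / 2 ^ n) := by
  induction m, hnm using Nat.le_induction with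
  | base => rfl
  | succ m hm ih =>
    have hpow : 2 ^ m = 2 ^ n * 2 ^ (m - n) := by rw [← pow_add, Nat.add_sub_cancel' hm]
    have hpt : (k : ℚ) / 2 ^ n = ((k * 2 ^ (m - n) : ℕ) : ℚ) / 2 ^ m := by
      rw [← Nat.cast_ofNat, ← Nat.cast_pow, ← Nat.cast_pow, hpow]
      push_cast
      field_simp
    rw [hpt, hashAux_succ_div_two_pow _ _ (hpow ▸ Nat.mul_le_mul_right _ hk), ← hpt, ih]

lemma evI_hash_div_two_pow {n k : ℕ} (hk : k ≤ 2 ^ n) :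
    evI (hash α β) ((k : ℚ) / 2 ^ n) = hashAux n α β ((k : ℚ) / 2 ^ n) := by
  obtain ⟨v, j, hvn, hj, hden, ht⟩ := exists_den_eq_two_pow_of_le hk
  rw [evI, dif_pos (dyadicI_mem hk)]
  change hashAux (padicValNat 2 ((k : ℚ) / 2 ^ n).den) α β ((k : ℚ) / 2 ^ n) = _
  rw [hden, padicValNat.prime_pow, ht, hashAux_div_two_pow_of_le α β hvn hj]

lemma xorConv_succ_of_lt {n k : ℕ} (hk : k < 2 ^ n) :
    xorConv (n + 1) α β k = xorConv n (T0 α) (T0 β) k + xorConv n (T1 α) (T1 β) k := by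
  rw [xorConv, sum_range_two_pow_succ]
  congr 1 <;> refine Finset.sum_congr rfl fun i hi => ?_ <;> have hi := Finset.mem_range.mp hi
  · rw [dyadicDiff_T0 α hi, dyadicDiff_T0 β (Nat.xor_lt_two_pow hi hk)]
  · rw [Nat.two_pow_add_xor hi hk, dyadicDiff_T1 α hi, dyadicDiff_T1 β (Nat.xor_lt_two_pow hi hk)]

lemma xorConv_succ_two_pow_add {n k : ℕ} (hk : k < 2 ^ n) :
    xorConv (n + 1) α β (2 ^ n + k) = xorConv n (T0 α) (T1 β) k + xorConv n (T1 α) (T0 β) k := by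
  rw [xorConv, sum_range_two_pow_succ]
  congr 1 <;> refine Finset.sum_congr rfl fun i hi => ?_ <;> have hi := Finset.mem_range.mp hi
  · rw [Nat.xor_two_pow_add hi hk, dyadicDiff_T0 α hi, dyadicDiff_T1 β (Nat.xor_lt_two_pow hi hk)]
  · rw [Nat.two_pow_add_xor_two_pow_add hi hk, dyadicDiff_T1 α hi,
      dyadicDiff_T0 β (Nat.xor_lt_two_pow hi hk)]

lemma hashAux_sub_eq_xorConv {n k : ℕ} (hk : k < 2 ^ n) :
    hashAux n α β (((k : ℚ) + 1) / 2 ^ n) - hashAux n α β ((k : ℚ) / 2 ^ n) = xorConv n α β k := by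
  induction n generalizing α β k with
  | zero =>
    obtain rfl : k = 0 := by simpa using hk
    simp [hashAux, xorConv, dyadicDiff]
  | succ n ih =>
    rcases lt_or_ge k (2 ^ n) with hkn | hkn
    · have h1 := div_two_pow_succ_le_half (x := (k : ℚ) + 1) (by exact_mod_cast hkn)
      have h0 := div_two_pow_succ_le_half (x := (k : ℚ)) (by exact_mod_cast hkn.le)
      rw [hashAux_succ_of_le_half _ _ _ h1, hashAux_succ_of_le_half _ _ _ h0,
        two_mul_div_two_pow_succ, two_mul_div_two_pow_succ, xorConv_succ_of_lt α β hkn,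
        ← ih _ _ hkn, ← ih _ _ hkn]
      ring
    · obtain ⟨k, rfl⟩ := Nat.exists_eq_add_of_le hkn
      have hk' : k < 2 ^ n := by rw [pow_succ] at hk; omega
      have h1 := half_le_two_pow_add_div (n := n) (x := (k : ℚ) + 1) (by positivity)
      have h0 := half_le_two_pow_add_div (n := n) (x := (k : ℚ)) (by positivity)
      push_cast
      rw [add_assoc, hashAux_succ_of_half_le _ _ _ h1, hashAux_succ_of_half_le _ _ _ h0,
        two_mul_two_pow_add_div_sub_one, two_mul_two_pow_add_div_sub_one,
        xorConv_succ_two_pow_add α β hk', ← ih _ _ hk', ← ih _ _ hk']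
      ring

lemma dyadicDiff_hash {n k : ℕ} (hk : k < 2 ^ n) :
    dyadicDiff n (hash α β) k = xorConv n α β k := by
  have hsucc := evI_hash_div_two_pow α β (k := k + 1) hk
  push_cast at hsucc
  rw [dyadicDiff, hsucc, evI_hash_div_two_pow α β hk.le, hashAux_sub_eq_xorConv α β hk]

end

/-- Theorem 1.8: `L_n(α # β) = L_n(α) · L_n(β)` in `Γ_Q`. -/
theorem statement2 (α β : X) (n : ℕ) :
    Ln n (hash α β) = Ln n α * Ln n β := by
  rw [Ln_eq_lamSum, Ln_eq_lamSum, Ln_eq_lamSum, lamSum_mul_lamSum]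
  refine Finset.sum_congr rfl fun k hk => congrArg (· • lamQ k) ?_
  dsimp only
  rw [dyadicDiff_hash α β (Finset.mem_range.mp hk), xorConv, Finset.mul_sum]
  refine Finset.sum_congr rfl fun i _ => ?_
  have hsq : (-1 : ℚ) ^ i * (-1) ^ i = 1 := by rw [← mul_pow]; norm_num
  rw [neg_one_pow_xor]
  linear_combination -(-1) ^ k * dyadicDiff n α i * dyadicDiff n β (i ^^^ k) * hsq
end
end

section
/- For α ∈ X the following are equivalent: (1) α is convex; (2) for each n ≥ 0, writing q = 2ⁿ and L_n(α) = Σ_{i=0}^{q−1} cᵢ(−1)ⁱλᵢ (so cᵢ = α((i+1)/q) − α(i/q)), one has c₀ ≥ c₁ ≥ ⋯ ≥ c_{q−1}; (3) for each n ≥ 0 with q = 2ⁿ, L_n(α) is a ℚ-linear combination of δ₁,…,δ_q in which the coefficients of δ₁,…,δ_{q−1} are all ≥ 0. -/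
open scoped BigOperators

noncomputable section

attribute [local instance] Classical.propDecidable

/-!
Writing `cᵢ = α((i+1)/q) − α(i/q)`, the convexity inequality at `(i+1)/q` says exactly
`c_{i+1} ≤ cᵢ`. Since `δ_r = ∑_{i<r} (−1)ⁱ λᵢ`, the `λᵢ`-coefficient of `∑_r e_r δ_r` is
`(−1)ⁱ ∑_{r>i} e_r`; so `L_n(α) = ∑_r e_r δ_r` means `cᵢ = ∑_{r>i} e_r` for `i < q`, which
determines `e_r = c_{r−1} − c_r` for `1 ≤ r < q` (and `e_q = c_{q−1}`). These are `≥ 0`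
exactly when the `cᵢ` decrease.
-/

open Finset

lemma coeff_sum_smul_lamQ {q j : ℕ} (hj : j < q) (a : ℕ → ℚ) :
    (∑ i ∈ range q, a i • lamQ i).coeff (show NimNat from j) = a j := by
  rw [MonoidAlgebra.coeff_sum, Finset.sum_apply', Finset.sum_eq_single_of_mem j (mem_range.2 hj)]
  · rw [lamQ, MonoidAlgebra.coeff_smul_apply, MonoidAlgebra.coeff_single, Finsupp.single_eq_same,
      smul_eq_mul, mul_one]
  · intro i _ hij
    exact smul_eq_zero_of_right _ (Finsupp.single_eq_of_ne (M := ℚ) (b := 1) hij.symm)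

lemma sum_smul_lamQ_inj {q : ℕ} {a b : ℕ → ℚ} :
    ∑ i ∈ range q, a i • lamQ i = ∑ i ∈ range q, b i • lamQ i ↔ ∀ i < q, a i = b i := by
  refine ⟨fun h i hi => ?_, fun h => sum_congr rfl fun i hi => by rw [h i (mem_range.1 hi)]⟩
  simpa only [coeff_sum_smul_lamQ hi] using congrArg (·.coeff (show NimNat from i)) h

lemma sum_smul_deltaQ (q : ℕ) (c : ℕ → ℚ) :
    ∑ r ∈ Icc 1 q, c r • deltaQ r
      = ∑ i ∈ range q, ((-1 : ℚ) ^ i * ∑ r ∈ Ioc i q, c r) • lamQ i := by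
  simp only [deltaQ, smul_sum, smul_smul]
  rw [sum_comm' (t' := range q) (s' := fun i => Ioc i q)
    (by intro r i; simp only [mem_Icc, mem_Ioc, mem_range]; omega)]
  refine sum_congr rfl fun i _ => ?_
  rw [← sum_smul, ← sum_mul, mul_comm]

lemma sum_Ioc_sub_succ (g : ℕ → ℚ) {i q : ℕ} (h : i ≤ q) :
    ∑ r ∈ Ioc i q, (g (r - 1) - g r) = g i - g q := by
  rw [← Ico_add_one_add_one_eq_Ioc, ← sum_Ico_add' (c := 1), ← neg_sub, ← sum_Ico_sub g h,
    ← sum_neg_distrib]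
  simp only [Nat.add_sub_cancel, neg_sub]

lemma exists_sum_smul_deltaQ_iff (q : ℕ) (d : ℕ → ℚ) :
    (∃ c : ℕ → ℚ, ∑ i ∈ range q, ((-1 : ℚ) ^ i * d i) • lamQ i = ∑ r ∈ Icc 1 q, c r • deltaQ r ∧
        ∀ r : ℕ, 1 ≤ r → r ≤ q - 1 → 0 ≤ c r) ↔
      ∀ i, i + 1 < q → d (i + 1) ≤ d i := by
  have tails : ∀ c : ℕ → ℚ, ∑ i ∈ range q, ((-1 : ℚ) ^ i * d i) • lamQ i
      = ∑ r ∈ Icc 1 q, c r • deltaQ r ↔ ∀ i < q, d i = ∑ r ∈ Ioc i q, c r := by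
    intro c
    rw [sum_smul_deltaQ, sum_smul_lamQ_inj]
    exact forall₂_congr fun i _ => mul_right_inj' (pow_ne_zero i (by norm_num))
  simp only [tails]
  constructor
  · rintro ⟨c, hd, hc⟩ i hi
    have step : d i = c (i + 1) + d (i + 1) := by
      rw [hd i (by omega), hd (i + 1) hi, ← Icc_add_one_left_eq_Ioc, Icc_eq_cons_Ioc (by omega),
        sum_cons]
    linarith [hc (i + 1) (by omega) (by omega)]
  · intro hd
    set g : ℕ → ℚ := fun r => if r = q then 0 else d r
    refine ⟨fun r => g (r - 1) - g r, fun i hi => ?_, fun r h1 h2 => ?_⟩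
    · rw [sum_Ioc_sub_succ g hi.le]
      simp [g, hi.ne]
    · have hmono := hd (r - 1) (by omega)
      simp only [g, if_neg (show r - 1 ≠ q by omega), if_neg (show r ≠ q by omega)]
      rw [Nat.sub_add_cancel h1] at hmono
      linarith

def increment (α : X) (n i : ℕ) : ℚ := evI α (((i : ℚ) + 1) / 2 ^ n) - evI α ((i : ℚ) / 2 ^ n)

lemma increment_succ (α : X) (n i : ℕ) :
    increment α n (i + 1) = evI α (((i : ℚ) + 2) / 2 ^ n) - evI α (((i : ℚ) + 1) / 2 ^ n) := by
  rw [increment, Nat.cast_succ, add_assoc, one_add_one_eq_two]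

lemma convexX_iff_increment_antitone (α : X) :
    ConvexX α ↔ ∀ n i : ℕ, i + 1 < 2 ^ n → increment α n (i + 1) ≤ increment α n i := by
  refine ⟨fun h n i hi => ?_, fun h n i hi0 hi => ?_⟩
  · have := h n (i + 1) i.succ_pos hi
    rw [Nat.cast_succ, add_sub_cancel_right, add_assoc, one_add_one_eq_two] at this
    rw [increment_succ, increment]
    linarith
  · obtain ⟨j, rfl⟩ := Nat.exists_eq_add_of_lt hi0
    have := h n j (by omega)
    rw [increment_succ, increment] at this
    rw [zero_add, Nat.cast_add, Nat.cast_one, add_sub_cancel_right, add_assoc, one_add_one_eq_two]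
    linarith

/-- Lemma 1.11: for `α ∈ X` the following are equivalent: (1) `α` is convex;
(2) for each `n`, the coefficients `cᵢ = α((i+1)/q) − α(i/q)` of `L_n(α)` satisfy
`c₀ ≥ c₁ ≥ ⋯ ≥ c_{q−1}`; (3) for each `n`, `L_n(α)` is a linear combination of
`δ₁, …, δ_q` where the coefficients of `δ₁, …, δ_{q−1}` are `≥ 0`. -/
theorem statement5 (α : X) :
    (ConvexX α ↔ ∀ n i : ℕ, i + 1 < 2 ^ n →
        evI α (((i : ℚ) + 2) / 2 ^ n) - evI α (((i : ℚ) + 1) / 2 ^ n)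
          ≤ evI α (((i : ℚ) + 1) / 2 ^ n) - evI α ((i : ℚ) / 2 ^ n)) ∧
    (ConvexX α ↔ ∀ n : ℕ, ∃ c : ℕ → ℚ,
        Ln n α = ∑ r ∈ Finset.Icc 1 (2 ^ n), c r • deltaQ r ∧
        ∀ r : ℕ, 1 ≤ r → r ≤ 2 ^ n - 1 → 0 ≤ c r) := by
  have h := convexX_iff_increment_antitone α
  constructor
  · simp only [increment_succ] at h
    exact h
  · exact h.trans
      (forall_congr' fun n => (exists_sum_smul_deltaQ_iff (2 ^ n) (increment α n)).symm)

end
end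

section
/- Suppose α ∈ X is convex and Lipschitz with α(0) = 0 and α(1) = 1, and suppose that the power series S_α, viewed as an element of the field of fractions ℚ((w)) of ℚ[[w]], lies in (the image under the natural embedding of) a finite field extension L of ℚ(w). Then μ(α) is algebraic over ℚ of degree at most [L : ℚ(w)]. -/
open scoped BigOperators
open scoped RatFunc

noncomputable section

attribute [local instance] Classical.propDecidable

set_option synthInstance.maxHeartbeats 1000000
set_option maxHeartbeats 1000000

/-!
Clearing denominators in the minimal polynomial of `S_α` over `ℚ(w)` gives a nonzero
`Q ∈ ℚ[w][Y]` of `Y`-degree at most `[L : ℚ(w)]` with `Q(w, S_α) = 0`. The coefficients of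
`S_α` converge to `μ`, so they are bounded, `S_α(x)` converges for `|x| < 1`, and by Abel's
theorem `(1 - x) S_α(x) → μ` as `x → 1⁻`. Rescaling the roots of `Q` by `1 - w` gives a relation
for `(1 - x) S_α(x)`; once the largest power of `w - 1` dividing all its coefficients is removed,
letting `x → 1⁻` leaves a nonzero rational polynomial of degree at most `[L : ℚ(w)]` that
vanishes at `μ`.
-/

open Filter Topology

namespace PowerSeries

open Polynomial

lemma sum_range_coeff_one_sub_X_mul {R : Type*} [CommRing R] (f : R⟦X⟧) (n : ℕ) :
    ∑ i ∈ Finset.range (n + 1), coeff i ((1 - X) * f) = coeff n f := by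
  induction n with
  | zero => rw [Finset.sum_range_one, sub_mul, one_mul, map_sub, coeff_zero_X_mul, sub_zero]
  | succ n ih =>
    rw [Finset.sum_range_succ, ih, sub_mul, one_mul, map_sub, coeff_succ_X_mul]
    abel

lemma coe_one_sub_X {R : Type*} [CommRing R] : ((1 - Polynomial.X : R[X]) : R⟦X⟧) = 1 - X := by
  rw [Polynomial.coe_sub, Polynomial.coe_one, Polynomial.coe_X]

section Normed

variable {R : Type*} [NormedCommRing R]

/-- Junk value `0` unless the series is summable. -/
def evalSum (f : R⟦X⟧) (x : R) : R := ∑' n, coeff n f * x ^ n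

lemma sum_antidiagonal_coeff_mul_pow (f g : R⟦X⟧) (x : R) (n : ℕ) :
    ∑ kl ∈ Finset.HasAntidiagonal.antidiagonal n,
        coeff kl.1 f * x ^ kl.1 * (coeff kl.2 g * x ^ kl.2) = coeff n (f * g) * x ^ n := by
  rw [coeff_mul, Finset.sum_mul]
  refine Finset.sum_congr rfl fun kl hkl => ?_
  rw [← Finset.HasAntidiagonal.mem_antidiagonal.mp hkl, pow_add]
  ring

lemma summable_norm_coeff_polynomial_mul_pow (p : R[X]) (x : R) :
    Summable fun n => ‖coeff n (p : R⟦X⟧) * x ^ n‖ :=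
  summable_of_ne_finset_zero (s := p.support) fun n hn => by
    simp [Polynomial.notMem_support_iff.mp hn]

lemma evalSum_polynomial (p : R[X]) (x : R) : evalSum (p : R⟦X⟧) x = p.eval x := by
  rw [evalSum, tsum_eq_sum (s := p.support) fun n hn => by
    simp [Polynomial.notMem_support_iff.mp hn], Polynomial.eval_eq_sum, Polynomial.sum_def]
  simp

lemma evalSum_one_sub_X (x : R) : evalSum (1 - X : R⟦X⟧) x = 1 - x := by
  rw [← coe_one_sub_X, evalSum_polynomial, eval_sub, eval_one, eval_X]

def absSummableAt (x : R) : Subring R⟦X⟧ where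
  carrier := {f | Summable fun n => ‖coeff n f * x ^ n‖}
  zero_mem' := by simp
  one_mem' := by simpa using summable_norm_coeff_polynomial_mul_pow (1 : R[X]) x
  add_mem' {f g} hf hg := (hf.add hg).of_nonneg_of_le (fun _ => norm_nonneg _) fun n => by
    simpa [add_mul] using norm_add_le _ _
  neg_mem' {f} hf := by simpa using hf
  mul_mem' {f g} hf hg := by
    simpa only [Set.mem_ofPred_eq, sum_antidiagonal_coeff_mul_pow] using
      summable_norm_sum_mul_antidiagonal_of_summable_norm hf hg

lemma polynomial_mem_absSummableAt (p : R[X]) (x : R) : (p : R⟦X⟧) ∈ absSummableAt x :=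
  summable_norm_coeff_polynomial_mul_pow p x

lemma one_sub_X_mem_absSummableAt (x : R) : (1 - X : R⟦X⟧) ∈ absSummableAt x :=
  coe_one_sub_X (R := R) ▸ polynomial_mem_absSummableAt _ x

lemma mem_absSummableAt_of_bounded [NormOneClass R] {f : R⟦X⟧} {C : ℝ}
    (hC : ∀ n, ‖coeff n f‖ ≤ C) {x : R} (hx : ‖x‖ < 1) : f ∈ absSummableAt x := by
  refine ((summable_geometric_of_lt_one (norm_nonneg x) hx).mul_left C).of_nonneg_of_le
    (fun _ => norm_nonneg _) fun n => ?_
  calc ‖coeff n f * x ^ n‖ ≤ ‖coeff n f‖ * ‖x‖ ^ n :=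
        (norm_mul_le _ _).trans (mul_le_mul_of_nonneg_left (norm_pow_le _ _) (norm_nonneg _))
    _ ≤ C * ‖x‖ ^ n := by gcongr; exact hC n

variable [CompleteSpace R]

/-- Summation at `x` is multiplicative by the Cauchy product formula. -/
def evalAbsSummable (x : R) : absSummableAt x →+* R where
  toFun f := evalSum f x
  map_one' := by simpa using evalSum_polynomial 1 x
  map_mul' f g := by
    rw [evalSum, evalSum, evalSum, tsum_mul_tsum_eq_tsum_sum_antidiagonal_of_summable_norm f.2 g.2]
    exact tsum_congr fun n => (sum_antidiagonal_coeff_mul_pow _ _ x n).symm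
  map_zero' := by simp [evalSum]
  map_add' f g := by
    simp only [evalSum, Subring.coe_add, map_add, add_mul]
    exact (Summable.of_norm f.2).tsum_add (Summable.of_norm g.2)

lemma evalAbsSummable_apply {x : R} (f : absSummableAt x) :
    evalAbsSummable x f = evalSum f x := rfl

lemma eval₂_evalSum_eq_zero {K : Type*} [CommRing K] [Algebra K R] {Q : K[X][X]} {f : R⟦X⟧}
    {x : R} (hf : f ∈ absSummableAt x) (hQ : Polynomial.aeval f Q = 0) :
    Q.eval₂ (Polynomial.aeval x).toRingHom (evalSum f x) = 0 := by
  let ψ : K[X] →+* absSummableAt x := (algebraMap K[X] R⟦X⟧).codRestrict _ fun p => by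
    rw [algebraMap_apply', ← Polynomial.polynomial_map_coe]
    exact polynomial_mem_absSummableAt _ x
  have hψ : (evalAbsSummable x).comp ψ = (Polynomial.aeval x).toRingHom :=
    RingHom.ext fun p => by
      change evalSum (map (algebraMap K R) p) x = Polynomial.aeval x p
      rw [← Polynomial.polynomial_map_coe, evalSum_polynomial, eval_map, aeval_def]
  have hrel : Q.eval₂ ψ ⟨f, hf⟩ = 0 := Subtype.ext <| by
    rw [← Subring.coe_subtype, Polynomial.hom_eval₂]
    exact hQ
  rw [← hψ, ← evalAbsSummable_apply ⟨f, hf⟩, ← Polynomial.hom_eval₂, hrel, map_zero]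

end Normed

/-- Abel's limit theorem for `(1 - X) * f`, whose partial coefficient sums are the coefficients
of `f`. -/
lemma tendsto_one_sub_mul_evalSum {f : ℝ⟦X⟧} {l : ℝ}
    (hf : Tendsto (fun n => coeff n f) atTop (𝓝 l)) :
    Tendsto (fun x => (1 - x) * evalSum f x) (𝓝[<] 1) (𝓝 l) := by
  obtain ⟨C, hC⟩ := hf.norm.bddAbove_range
  have hpartial :
      Tendsto (fun n => ∑ i ∈ Finset.range n, coeff i ((1 - X) * f)) atTop (𝓝 l) := by
    rw [← tendsto_add_atTop_iff_nat 1]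
    simpa only [sum_range_coeff_one_sub_X_mul] using hf
  refine (Real.tendsto_tsum_powerSeries_nhdsWithin_lt hpartial).congr' ?_
  filter_upwards [Ioo_mem_nhdsLT (show (-1 : ℝ) < 1 by norm_num)] with x hx
  have hfx : f ∈ absSummableAt x := mem_absSummableAt_of_bounded (fun n => hC ⟨n, rfl⟩)
    (by rw [Real.norm_eq_abs, abs_lt]; exact hx)
  have := map_mul (evalAbsSummable x) ⟨_, one_sub_X_mem_absSummableAt x⟩ ⟨f, hfx⟩
  rwa [evalAbsSummable_apply, evalAbsSummable_apply, evalAbsSummable_apply, Subring.coe_mul,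
    evalSum_one_sub_X] at this

end PowerSeries

namespace Polynomial

open scoped PowerSeries

lemma natDegree_le_natDegree_of_support_subset {R S : Type*} [Semiring R] [Semiring S]
    {p : R[X]} {q : S[X]} (hp : p ≠ 0) (h : p.support ⊆ q.support) :
    p.natDegree ≤ q.natDegree :=
  le_natDegree_of_mem_supp _ (h (natDegree_mem_support_of_nonzero hp))

variable {K : Type*} [Field K]

lemma exists_eq_C_pow_mul_map_evalRingHom_ne_zero {R : K[X][X]} (hR : R ≠ 0) (a : K) :
    ∃ (v : ℕ) (R' : K[X][X]), R = C ((X - C a) ^ v) * R' ∧ R'.map (evalRingHom a) ≠ 0 := by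
  have hfin : FiniteMultiplicity (C (X - C a)) R :=
    .of_not_isUnit (isUnit_C.not.mpr (not_isUnit_X_sub_C a)) hR
  obtain ⟨R', hRR', hndvd⟩ := hfin.exists_eq_pow_mul_and_not_dvd
  refine ⟨_, R', by rwa [C_pow], fun h => hndvd ?_⟩
  refine (C_dvd_iff_dvd_coeff _ _).mpr fun i => dvd_iff_isRoot.mpr ?_
  simpa using congr_arg (coeff · i) h

section Topological

variable {𝕜 : Type*} [Field 𝕜] [TopologicalSpace 𝕜] [IsTopologicalRing 𝕜] [Algebra K 𝕜]

lemma continuous_eval₂_aeval (R : K[X][X]) :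
    Continuous fun p : 𝕜 × 𝕜 => R.eval₂ (aeval p.1).toRingHom p.2 := by
  simp only [eval₂_eq_sum, Polynomial.sum_def]
  exact continuous_finsetSum _ fun n _ =>
    ((Polynomial.continuous_aeval _).comp continuous_fst).mul (continuous_snd.pow n)

lemma tendsto_eval₂_aeval (R : K[X][X]) {a : K} {l : Filter 𝕜} (hl : l ≤ 𝓝 (algebraMap K 𝕜 a))
    {t : 𝕜 → 𝕜} {μ : 𝕜} (ht : Tendsto t l (𝓝 μ)) :
    Tendsto (fun x => R.eval₂ (aeval x).toRingHom (t x)) l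
      (𝓝 (aeval μ (R.map (evalRingHom a)))) := by
  have hlim := ((continuous_eval₂_aeval R).tendsto (algebraMap K 𝕜 a, μ)).comp
    ((tendsto_id.mono_left hl).prodMk_nhds ht)
  have hval :
      R.eval₂ (aeval (algebraMap K 𝕜 a)).toRingHom μ = aeval μ (R.map (evalRingHom a)) := by
    rw [aeval_def, eval₂_map]
    congr 1
    exact RingHom.ext fun c => aeval_algebraMap_apply_eq_algebraMap_eval a c
  rw [← hval]
  exact hlim

lemma exists_aeval_eq_zero_of_tendsto [T2Space 𝕜] {R : K[X][X]} (hR : R ≠ 0) {a : K}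
    {l : Filter 𝕜} [l.NeBot] (hl : l ≤ 𝓝[≠] (algebraMap K 𝕜 a)) {t : 𝕜 → 𝕜} {μ : 𝕜}
    (ht : Tendsto t l (𝓝 μ)) (hzero : ∀ᶠ x in l, R.eval₂ (aeval x).toRingHom (t x) = 0) :
    ∃ p : K[X], p ≠ 0 ∧ p.natDegree ≤ R.natDegree ∧ aeval μ p = 0 := by
  obtain ⟨v, R', hRR', hR'⟩ := exists_eq_C_pow_mul_map_evalRingHom_ne_zero hR a
  have hdeg : R'.natDegree = R.natDegree := by
    rw [hRR', natDegree_C_mul (pow_ne_zero _ (X_sub_C_ne_zero a))]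
  have hzero' : ∀ᶠ x in l, R'.eval₂ (aeval x).toRingHom (t x) = 0 := by
    filter_upwards [hzero, hl self_mem_nhdsWithin] with x hx hxa
    rw [hRR', eval₂_mul, eval₂_C] at hx
    refine (mul_eq_zero.mp hx).resolve_left ?_
    simpa using pow_ne_zero v (sub_ne_zero.mpr hxa)
  refine ⟨_, hR', hdeg ▸ natDegree_map_le, tendsto_nhds_unique
    (tendsto_eval₂_aeval R' (hl.trans nhdsWithin_le_nhds) ht) ?_⟩
  exact tendsto_const_nhds.congr' (hzero'.mono fun x hx => hx.symm)

end Topological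

open PowerSeries in
lemma exists_aeval_eq_zero_of_tendsto_coeff [Algebra K ℝ] {Q : K[X][X]} (hQ : Q ≠ 0)
    {f : K⟦X⟧} (hf : aeval f Q = 0) {μ : ℝ}
    (hμ : Tendsto (fun n => algebraMap K ℝ (PowerSeries.coeff n f)) atTop (𝓝 μ)) :
    ∃ p : K[X], p ≠ 0 ∧ p.natDegree ≤ Q.natDegree ∧ aeval μ p = 0 := by
  set g : ℝ⟦X⟧ := PowerSeries.map (algebraMap K ℝ) f
  have hg : Tendsto (fun n => PowerSeries.coeff n g) atTop (𝓝 μ) := by simpa [g] using hμ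
  have hgQ : aeval g Q = 0 := by
    have halg : (PowerSeries.map (algebraMap K ℝ)).comp (algebraMap K[X] K⟦X⟧) =
        algebraMap K[X] ℝ⟦X⟧ := RingHom.ext fun p => by simp [algebraMap_apply']
    rw [aeval_def, ← halg, ← hom_eval₂, ← aeval_def, hf, map_zero]
  obtain ⟨C, hC⟩ := hg.norm.bddAbove_range
  have hrel : ∀ x ∈ Set.Ioo (-1 : ℝ) 1,
      (Q.scaleRoots (1 - X)).eval₂ (aeval x).toRingHom ((1 - x) * evalSum g x) = 0 := by
    intro x hx
    have hgx : g ∈ absSummableAt x := mem_absSummableAt_of_bounded (fun n => hC ⟨n, rfl⟩)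
      (by rw [Real.norm_eq_abs, abs_lt]; exact hx)
    have h1x : (aeval x).toRingHom (1 - X : K[X]) = 1 - x := by simp
    rw [← h1x]
    exact scaleRoots_eval₂_eq_zero _ (eval₂_evalSum_eq_zero hgx hgQ)
  obtain ⟨p, hp, hpdeg, hpμ⟩ := exists_aeval_eq_zero_of_tendsto (scaleRoots_ne_zero hQ (1 - X))
    (a := 1) (l := 𝓝[<] 1) (by simpa using nhdsLT_le_nhdsNE (1 : ℝ))
    (tendsto_one_sub_mul_evalSum hg) (eventually_of_mem (Ioo_mem_nhdsLT (by norm_num)) hrel)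
  exact ⟨p, hp, hpdeg.trans (natDegree_scaleRoots _ _).le, hpμ⟩

end Polynomial

open Polynomial in
open scoped PowerSeries LaurentSeries in
lemma exists_aeval_eq_zero_of_ofPowerSeries_mem_range {F L : Type*} [Field F] [Field L]
    [Algebra (RatFunc F) L] [FiniteDimensional (RatFunc F) L] (emb : L →ₐ[RatFunc F] F⸨X⸩)
    {f : F⟦X⟧} (hf : HahnSeries.ofPowerSeries ℤ F f ∈ Set.range emb) :
    ∃ Q : F[X][X], Q ≠ 0 ∧ Q.natDegree ≤ Module.finrank (RatFunc F) L ∧ aeval f Q = 0 := by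
  obtain ⟨l, hl⟩ := hf
  set P := minpoly (RatFunc F) l
  set Q := IsLocalization.integerNormalization (nonZeroDivisors F[X]) P
  have hQ : Q ≠ 0 := IsFractionRing.integerNormalization_eq_zero_iff.not.mpr
    (minpoly.ne_zero (IsIntegral.of_finite _ l))
  have hdeg : Q.natDegree ≤ P.natDegree := natDegree_le_natDegree_of_support_subset hQ
    (IsLocalization.integerNormalization_support _ P)
  have hQL : aeval (HahnSeries.ofPowerSeries ℤ F f) Q = 0 := by
    refine IsLocalization.integerNormalization_aeval_eq_zero _ P ?_
    rw [← hl, aeval_algHom_apply, minpoly.aeval, map_zero]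
  have halg : (HahnSeries.ofPowerSeries ℤ F).comp (algebraMap F[X] F⟦X⟧) = algebraMap F[X] F⸨X⸩ :=
    RingHom.ext fun p => by
      rw [RingHom.comp_apply, PowerSeries.algebraMap_apply', Algebra.algebraMap_self,
        PowerSeries.map_id, id_eq, RatFunc.coe_coe,
        IsScalarTower.algebraMap_apply F[X] (RatFunc F) F⸨X⸩]
      rfl
  refine ⟨Q, hQ, hdeg.trans (minpoly.natDegree_le l), ?_⟩
  apply HahnSeries.ofPowerSeries_injective (Γ := ℤ)
  rw [aeval_def, hom_eval₂, halg, ← aeval_def, hQL, map_zero]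

theorem statement8_general (α : X)
    (L : Type) [Field L] [Algebra (RatFunc ℚ) L]
    (hL : FiniteDimensional (RatFunc ℚ) L)
    (emb : L →ₐ[RatFunc ℚ] LaurentSeries ℚ)
    (hS : HahnSeries.ofPowerSeries ℤ ℚ (hkSeries α) ∈ Set.range emb)
    (mu : ℝ) (hmu : IsHKmu α mu) :
    IsAlgebraic ℚ mu ∧ (minpoly ℚ mu).natDegree ≤ Module.finrank (RatFunc ℚ) L := by
  obtain ⟨Q, hQ, hQdeg, hQS⟩ := exists_aeval_eq_zero_of_ofPowerSeries_mem_range emb hS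
  have hcoeff : Tendsto (fun n => algebraMap ℚ ℝ (PowerSeries.coeff n (hkSeries α))) atTop
      (𝓝 mu) := by
    simpa [hkSeries, IsHKmu] using hmu
  obtain ⟨p, hp, hpdeg, hpmu⟩ := Polynomial.exists_aeval_eq_zero_of_tendsto_coeff hQ hQS hcoeff
  exact ⟨⟨p, hp, hpmu⟩,
    (Polynomial.natDegree_le_of_dvd (minpoly.dvd ℚ mu hpmu) hp).trans (hpdeg.trans hQdeg)⟩

/-- Theorem 1.14: if `α` is convex Lipschitz with `α(0) = 0`, `α(1) = 1`, and `S_α` lies in a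
finite extension `L` of `ℚ(w)` inside `ℚ((w))`, then `μ(α)` is algebraic over `ℚ` of degree
at most `[L : ℚ(w)]`. -/
theorem statement8 (α : X) (hconv : ConvexX α) (hlip : ∃ m : ℚ, LipschitzQ m α)
    (h0 : α ⟨0, zero_mem_dyadicI⟩ = 0) (h1 : α ⟨1, one_mem_dyadicI⟩ = 1)
    (L : Type) [Field L] [Algebra (RatFunc ℚ) L]
    (hL : FiniteDimensional (RatFunc ℚ) L)
    (emb : L →ₐ[RatFunc ℚ] LaurentSeries ℚ)
    (hS : HahnSeries.ofPowerSeries ℤ ℚ (hkSeries α) ∈ Set.range emb)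
    (mu : ℝ) (hmu : IsHKmu α mu) :
    IsAlgebraic ℚ mu ∧ (minpoly ℚ mu).natDegree ≤ Module.finrank (RatFunc ℚ) L :=
  statement8_general α L hL emb hS mu hmu
end
end
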